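/- arXiv:2410.03968 — 3 statements merged into one kernel-verified Lean document; each statement's English description precedes it below -/
import Mathlib

section
/- Fix a probability vector p̂ ∈ Δ(V) with p̂_1 ≥ … ≥ p̂_d > 0 and ε with p̂_d ≤ ε < p̂_1. Let î = max{i : p̂_i > ε} and define ŵ_i = ε / log(p̂_i/(p̂_i − ε)) for 1 ≤ i ≤ î. Then for every probability vector q ∈ Δ(V): if q_i = 0 for all i > î, the infimum of Σ_i q_i log p_i over p ∈ N(p̂) equals Σ_i q_i log p̂_i − ε · max_{1 ≤ i ≤ î} (q_i / ŵ_i); otherwise this infimum equals −∞ (in the extended reals, with the convention log 0 = −∞). -/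
/-!
If `p ∈ N(p̂)`, the mass removed from the coordinates, `δᵢ = (p̂ᵢ - pᵢ)⁺`, sums to
`d_TV(p, p̂) ≤ ε`. By concavity of `log`, lowering `p̂ᵢ` by `δᵢ ≤ ε` costs at most
`(δᵢ / ε) · qᵢ log (p̂ᵢ / (p̂ᵢ - ε)) = δᵢ qᵢ / ŵᵢ`, so the total loss is at most
`ε · maxᵢ qᵢ / ŵᵢ`; moving `ε` from a maximizing coordinate to the last one, where `q`
vanishes, attains this bound. If instead `q` charges some `i > î`, then `p̂ᵢ ≤ ε`, so all
of `p̂ᵢ` can be moved away and the objective becomes `-∞`.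
-/

open Finset

noncomputable def elog (x : ℝ) : EReal := if x ≤ 0 then ⊥ else ((Real.log x : ℝ) : EReal)

def simplex (d : ℕ) : Set (Fin d → ℝ) := {p | (∀ i, 0 ≤ p i) ∧ ∑ i, p i = 1}

noncomputable def dTV {d : ℕ} (p q : Fin d → ℝ) : ℝ := (∑ i, |p i - q i|) / 2

def nbhd {d : ℕ} (phat : Fin d → ℝ) (ε : ℝ) : Set (Fin d → ℝ) :=
  {p | p ∈ simplex d ∧ dTV p phat ≤ ε}

noncomputable def obj {d : ℕ} (q p : Fin d → ℝ) : EReal :=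
  ∑ i, ((q i : ℝ) : EReal) * elog (p i)

/-- `ŵ_i = ε / log(p̂_i/(p̂_i − ε))`. -/
noncomputable def what {d : ℕ} (phat : Fin d → ℝ) (ε : ℝ) (i : Fin d) : ℝ :=
  ε / Real.log (phat i / (phat i - ε))

theorem EReal.coe_finset_sum {ι : Type*} (s : Finset ι) (f : ι → ℝ) :
    ((∑ i ∈ s, f i : ℝ) : EReal) = ∑ i ∈ s, ((f i : ℝ) : EReal) :=
  map_sum (⟨⟨Real.toEReal, EReal.coe_zero⟩, EReal.coe_add⟩ : ℝ →+ EReal) f s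

/-- The chord of `log` between `a - ε` and `a` lies below the graph. -/
theorem Real.log_sub_mul_log_div_le_log_sub_mul {a ε t : ℝ} (hε : 0 < ε) (hεa : ε < a)
    (ht₀ : 0 ≤ t) (ht₁ : t ≤ 1) :
    Real.log a - t * Real.log (a / (a - ε)) ≤ Real.log (a - t * ε) := by
  have hconc := strictConcaveOn_log_Ioi.concaveOn.2 (Set.mem_Ioi.2 (by linarith : 0 < a))
    (Set.mem_Ioi.2 (by linarith : 0 < a - ε)) (by linarith : 0 ≤ 1 - t) ht₀ (by ring)
  rw [Real.log_div (by linarith) (by linarith)]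
  calc Real.log a - t * (Real.log a - Real.log (a - ε))
      = (1 - t) * Real.log a + t * Real.log (a - ε) := by ring
    _ ≤ Real.log ((1 - t) * a + t * (a - ε)) := hconc
    _ = Real.log (a - t * ε) := by ring_nf

section
variable {d : ℕ}

theorem dTV_eq_sum_posPart {p phat : Fin d → ℝ} (h : ∑ i, p i = ∑ i, phat i) :
    dTV p phat = ∑ i, (phat i - p i)⁺ := by
  have habs : ∀ x : ℝ, |x| = 2 * x⁺ - x := fun x => by
    linarith [posPart_add_negPart x, posPart_sub_negPart x]
  simp only [dTV, abs_sub_comm (p _), habs, Finset.sum_sub_distrib, ← Finset.mul_sum, h]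
  ring

theorem obj_eq_coe_of_pos {q p : Fin d → ℝ} (hp : ∀ i, 0 < p i) :
    obj q p = ((∑ i, q i * Real.log (p i) : ℝ) : EReal) := by
  rw [obj, EReal.coe_finset_sum]
  refine Finset.sum_congr rfl fun i _ => ?_
  rw [elog, if_neg (hp i).not_ge, EReal.coe_mul]

theorem obj_eq_bot {q p : Fin d → ℝ} {j : Fin d} (hq : 0 < q j) (hp : p j = 0) :
    obj q p = ⊥ := by
  refine WithBot.sum_eq_bot_iff.2 ⟨j, Finset.mem_univ j, ?_⟩
  rw [hp, elog, if_pos le_rfl]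
  exact EReal.coe_mul_bot_of_pos hq

theorem coe_sub_le_coe_mul_elog {q a p δ ε : ℝ} (hq : 0 ≤ q) (hε : 0 < ε) (hδ₀ : 0 ≤ δ)
    (hδε : δ ≤ ε) (ha : q ≠ 0 → ε < a) (hp : a - δ ≤ p) :
    ((q * Real.log a - δ / ε * (q * Real.log (a / (a - ε))) : ℝ) : EReal) ≤ q * elog p := by
  rcases hq.eq_or_lt with rfl | hq
  · simp
  have hεa := ha hq.ne'
  have hchord := Real.log_sub_mul_log_div_le_log_sub_mul hε hεa (div_nonneg hδ₀ hε.le)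
    (div_le_one_of_le₀ hδε hε.le)
  rw [div_mul_cancel₀ _ hε.ne'] at hchord
  have hlog : Real.log (a - δ) ≤ Real.log p := Real.log_le_log (by linarith) hp
  rw [elog, if_neg (by linarith), ← EReal.coe_mul, EReal.coe_le_coe_iff]
  nlinarith [mul_le_mul_of_nonneg_left (hchord.trans hlog) hq.le]

theorem coe_sub_le_obj_of_mem_nbhd {phat q p : Fin d → ℝ} {ε M : ℝ} (hphat : ∑ i, phat i = 1)
    (hq : ∀ i, 0 ≤ q i) (hε : 0 < ε) (hsupp : ∀ i, q i ≠ 0 → ε < phat i)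
    (hM : ∀ i, q i ≠ 0 → q i * Real.log (phat i / (phat i - ε)) ≤ M) (hM₀ : 0 ≤ M)
    (hp : p ∈ nbhd phat ε) :
    ((∑ i, q i * Real.log (phat i) - M : ℝ) : EReal) ≤ obj q p := by
  obtain ⟨⟨-, hpsum⟩, hpε⟩ := hp
  set G : Fin d → ℝ := fun i => q i * Real.log (phat i / (phat i - ε))
  set δ : Fin d → ℝ := fun i => (phat i - p i)⁺
  have hδsum : ∑ i, δ i ≤ ε := dTV_eq_sum_posPart (hpsum.trans hphat.symm) ▸ hpε
  have hδ₀ : ∀ i, 0 ≤ δ i := fun i => posPart_nonneg _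
  have hδε : ∀ i, δ i ≤ ε := fun i =>
    (Finset.single_le_sum (fun j _ => hδ₀ j) (Finset.mem_univ i)).trans hδsum
  have hGM : ∀ i, G i ≤ M := fun i => by
    by_cases hqi : q i = 0
    · simp [G, hqi, hM₀]
    · exact hM i hqi
  have hloss : ∑ i, δ i / ε * G i ≤ M :=
    calc ∑ i, δ i / ε * G i ≤ ∑ i, δ i / ε * M :=
          Finset.sum_le_sum fun i _ => mul_le_mul_of_nonneg_left (hGM i) (div_nonneg (hδ₀ i) hε.le)
      _ = (∑ i, δ i) / ε * M := by rw [← Finset.sum_mul, ← Finset.sum_div]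
      _ ≤ 1 * M := mul_le_mul_of_nonneg_right ((div_le_one hε).2 hδsum) hM₀
      _ = M := one_mul M
  calc ((∑ i, q i * Real.log (phat i) - M : ℝ) : EReal)
      ≤ ((∑ i, (q i * Real.log (phat i) - δ i / ε * G i) : ℝ) : EReal) := by
        rw [EReal.coe_le_coe_iff, Finset.sum_sub_distrib]
        linarith
    _ = ∑ i, ((q i * Real.log (phat i) - δ i / ε * G i : ℝ) : EReal) := EReal.coe_finset_sum _ _
    _ ≤ obj q p := Finset.sum_le_sum fun i _ => coe_sub_le_coe_mul_elog (hq i) hε (hδ₀ i) (hδε i)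
          (hsupp i) (by linarith [le_posPart (phat i - p i)])

def moveMass (p : Fin d → ℝ) (i j : Fin d) (a : ℝ) : Fin d → ℝ :=
  p - Pi.single i a + Pi.single j a

section moveMass
variable {p : Fin d → ℝ} {i j k : Fin d} {a : ℝ}

theorem moveMass_apply_left (hij : i ≠ j) : moveMass p i j a i = p i - a := by
  simp [moveMass, hij]

theorem moveMass_apply_right (hij : i ≠ j) : moveMass p i j a j = p j + a := by
  simp [moveMass, hij.symm]

theorem moveMass_apply_of_ne (hki : k ≠ i) (hkj : k ≠ j) : moveMass p i j a k = p k := by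
  simp [moveMass, hki, hkj]

theorem sum_moveMass : ∑ k, moveMass p i j a k = ∑ k, p k := by
  simp [moveMass, Finset.sum_add_distrib, Finset.sum_sub_distrib]

theorem moveMass_mem_nbhd {ε : ℝ} (hp : p ∈ simplex d) (hij : i ≠ j) (ha₀ : 0 ≤ a)
    (hai : a ≤ p i) (haε : a ≤ ε) :
    moveMass p i j a ∈ nbhd p ε := by
  have hnonneg : ∀ k, 0 ≤ moveMass p i j a k := fun k => by
    by_cases hki : k = i
    · rw [hki, moveMass_apply_left hij]; linarith
    by_cases hkj : k = j
    · rw [hkj, moveMass_apply_right hij]; linarith [hp.1 j]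
    rw [moveMass_apply_of_ne hki hkj]; exact hp.1 k
  have hmoved : ∀ k, (p k - moveMass p i j a k)⁺ = (Pi.single i a : Fin d → ℝ) k := fun k => by
    by_cases hki : k = i
    · simp [hki, moveMass_apply_left hij, ha₀]
    by_cases hkj : k = j
    · simp [hkj, moveMass_apply_right hij, hij.symm, ha₀]
    simp [moveMass_apply_of_ne hki hkj, hki]
  refine ⟨⟨hnonneg, sum_moveMass.trans hp.2⟩, ?_⟩
  rw [dTV_eq_sum_posPart sum_moveMass]
  simpa [hmoved] using haε

theorem obj_moveMass {q : Fin d → ℝ} (hp : ∀ k, 0 < p k) (hij : i ≠ j) (ha₀ : 0 ≤ a)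
    (hai : a < p i) (hqj : q j = 0) :
    obj q (moveMass p i j a)
      = ((∑ k, q k * Real.log (p k) - q i * Real.log (p i / (p i - a)) : ℝ) : EReal) := by
  have hpos : ∀ k, 0 < moveMass p i j a k := fun k => by
    by_cases hki : k = i
    · rw [hki, moveMass_apply_left hij]; linarith
    by_cases hkj : k = j
    · rw [hkj, moveMass_apply_right hij]; linarith [hp j]
    rw [moveMass_apply_of_ne hki hkj]; exact hp k
  have hterm : ∀ k, q k * Real.log (moveMass p i j a k)
      = q k * Real.log (p k)
        - (Pi.single i (q i * Real.log (p i / (p i - a))) : Fin d → ℝ) k := fun k => by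
    by_cases hki : k = i
    · rw [hki, moveMass_apply_left hij, Pi.single_eq_same,
        Real.log_div (hp i).ne' (by linarith)]
      ring
    by_cases hkj : k = j
    · simp [hkj, hqj, hij.symm]
    simp [moveMass_apply_of_ne hki hkj, hki]
  rw [obj_eq_coe_of_pos hpos, Finset.sum_congr rfl fun k _ => hterm k, Finset.sum_sub_distrib,
    Fintype.sum_pi_single']

end moveMass

theorem iInf_obj_eq_bot {phat q : Fin d → ℝ} {ε : ℝ} (hphat : phat ∈ simplex d) {j k : Fin d}
    (hjk : j ≠ k) (hqj : 0 < q j) (hj : phat j ≤ ε) :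
    ⨅ p ∈ nbhd phat ε, obj q p = ⊥ :=
  le_bot_iff.1 <| (iInf₂_le _ (moveMass_mem_nbhd hphat hjk (hphat.1 j) le_rfl hj)).trans_eq
    (obj_eq_bot hqj (by rw [moveMass_apply_left hjk, sub_self]))

theorem iInf_obj_eq {phat q : Fin d → ℝ} {ε : ℝ} (hphat : phat ∈ simplex d)
    (hpos : ∀ i, 0 < phat i) (hq : ∀ i, 0 ≤ q i) (hε : 0 < ε)
    (hsupp : ∀ i, q i ≠ 0 → ε < phat i) {i₀ j : Fin d} (hi₀j : i₀ ≠ j) (hqj : q j = 0)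
    (hi₀ : ε < phat i₀)
    (hmax : ∀ i, q i ≠ 0 → q i * Real.log (phat i / (phat i - ε))
      ≤ q i₀ * Real.log (phat i₀ / (phat i₀ - ε))) :
    ⨅ p ∈ nbhd phat ε, obj q p
      = ((∑ i, q i * Real.log (phat i)
          - q i₀ * Real.log (phat i₀ / (phat i₀ - ε)) : ℝ) : EReal) := by
  have hloss₀ : 0 ≤ q i₀ * Real.log (phat i₀ / (phat i₀ - ε)) :=
    mul_nonneg (hq i₀) (Real.log_nonneg ((one_le_div (by linarith)).2 (by linarith)))
  refine le_antisymm ?_ ?_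
  · exact (iInf₂_le _ (moveMass_mem_nbhd hphat hi₀j hε.le hi₀.le le_rfl)).trans_eq
      (obj_moveMass hpos hi₀j hε.le hi₀ hqj)
  · exact le_iInf₂ fun p hp => coe_sub_le_obj_of_mem_nbhd hphat.2 hq hε hsupp hmax hloss₀ hp

end

theorem mul_div_what {d : ℕ} (phat : Fin d → ℝ) {ε : ℝ} (hε : ε ≠ 0) (i : Fin d) (x : ℝ) :
    ε * (x / what phat ε i) = x * Real.log (phat i / (phat i - ε)) := by
  rw [what, div_div_eq_mul_div, mul_div_cancel₀ _ hε]

/-- closed form for the inner (adversarial) minimization of the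
one-step Decoding Game under TV distance. -/
theorem stmt0 {d : ℕ} (hd : 0 < d) (phat : Fin d → ℝ) (ε : ℝ)
    (hmem : phat ∈ simplex d)
    (hpos : ∀ i, 0 < phat i)
    (hsort : ∀ i j : Fin d, i ≤ j → phat j ≤ phat i)
    (heps_lo : phat ⟨d - 1, by omega⟩ ≤ ε)
    (ihat : Fin d)
    (hihat1 : ε < phat ihat)
    (hihat2 : ∀ i : Fin d, ε < phat i → i ≤ ihat)
    (q : Fin d → ℝ) (hq : q ∈ simplex d) :
    ((∀ i : Fin d, ihat < i → q i = 0) →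
        ⨅ p ∈ nbhd phat ε, obj q p
          = (((∑ i, q i * Real.log (phat i))
              - ε * sSup {x : ℝ | ∃ i : Fin d, i ≤ ihat ∧ x = q i / what phat ε i} : ℝ) : EReal))
    ∧ (¬ (∀ i : Fin d, ihat < i → q i = 0) →
        ⨅ p ∈ nbhd phat ε, obj q p = (⊥ : EReal)) := by
  have hε : 0 < ε := (hpos _).trans_le heps_lo
  have hlt : ∀ i, i ≤ ihat → ε < phat i := fun i hi => hihat1.trans_le (hsort i ihat hi)
  have hlast : ihat < ⟨d - 1, by omega⟩ := lt_of_not_ge fun h => heps_lo.not_gt (hlt _ h)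
  obtain ⟨i₀, hi₀, hmax⟩ := (Finset.Iic ihat).exists_max_image (fun i => q i / what phat ε i)
    ⟨ihat, Finset.mem_Iic.2 le_rfl⟩
  rw [Finset.mem_Iic] at hi₀
  have hsSup : sSup {x : ℝ | ∃ i : Fin d, i ≤ ihat ∧ x = q i / what phat ε i}
      = q i₀ / what phat ε i₀ := by
    refine IsGreatest.csSup_eq ⟨⟨i₀, hi₀, rfl⟩, ?_⟩
    rintro _ ⟨i, hi, rfl⟩
    exact hmax i (Finset.mem_Iic.2 hi)
  refine ⟨fun hsupp => ?_, fun hnsupp => ?_⟩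
  · have hsupp' : ∀ i, q i ≠ 0 → i ≤ ihat := fun i hi => not_lt.1 fun h => hi (hsupp i h)
    rw [hsSup, mul_div_what phat hε.ne']
    refine iInf_obj_eq hmem hpos hq.1 hε (fun i hi => hlt i (hsupp' i hi))
      (hi₀.trans_lt hlast).ne (hsupp _ hlast) (hlt i₀ hi₀) fun i hi => ?_
    simp only [← mul_div_what phat hε.ne']
    exact mul_le_mul_of_nonneg_left (hmax i (Finset.mem_Iic.2 (hsupp' i hi))) hε.le
  · obtain ⟨j, hj, hqj⟩ := not_forall₂.1 hnsupp
    have hj₀ : (⟨0, hd⟩ : Fin d) < j := (Nat.zero_le ihat.val).trans_lt hj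
    exact iInf_obj_eq_bot hmem hj₀.ne' ((hq.1 j).lt_of_ne' hqj)
      (not_lt.1 fun h => hj.not_ge (hihat2 j h))
end

section
/- Fix T ≥ 1 and ε > 0. A model P̂ assigns to each t ≤ T and each context x_{<t} ∈ V^{t−1} a conditional distribution p̂_t(x_{<t}) ∈ Δ(V), and N(P̂) is the set of models P with d_TV(p_t(x_{<t}), p̂_t(x_{<t})) ≤ ε for all t ≤ T and x_{<t} ∈ V^{t−1}. For a strategy Q (another model) define L^T(Q, P) = E_Q[ Σ_{t=1}^T log p_t(X_{<t})_{X_t} ], the Q-expectation of the P-log-likelihood of the generated sequence. A strategy map P̂ ↦ Q(P̂) has no foresight if for all t ≤ T and x_{<t}, the vector q_t(x_{<t}; P̂) coincides with q_t(x_{<t}; P̂′) whenever p̂_s(x_{<s}) = p̂′_s(x_{<s}) for all s ≤ t and all contexts x_{<s}. Assume ε < max_i p̂_t(x_{<t})_i for all t, x_{<t}, all models P̂. Let Q̃(P̂) be the locally optimal strategy defined by q̃_t(x_{<t}) = argmax_{q ∈ Δ(V)} min_{p ∈ N(p̂_t(x_{<t}))} Σ_i q_i log p_i at every t and x_{<t}.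 Then for every no-foresight strategy map Q: inf_{P̂} min_{P ∈ N(P̂)} L^T(Q̃(P̂), P) ≥ inf_{P̂} min_{P ∈ N(P̂)} L^T(Q(P̂), P), where the infimum is over all models P̂ on V^T. -/
open Finset

/-- A model on `V^T`: for each time `t` and context `x_{<t} ∈ V^t` a vector of
conditional next-token weights. -/
abbrev Model (d T : ℕ) := (t : Fin T) → ((Fin t → Fin d) → (Fin d → ℝ))

/-- All conditional rows of the model are probability vectors. -/
def validModel {d T : ℕ} (P : Model d T) : Prop := ∀ t x, P t x ∈ simplex d

/-- `N(P̂)`: models whose every conditional row is within TV distance `ε` of `P̂`'s. -/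
def modelNbhd {d T : ℕ} (Phat : Model d T) (ε : ℝ) : Set (Model d T) :=
  {P | validModel P ∧ ∀ t x, dTV (P t x) (Phat t x) ≤ ε}

/-- Probability assigned by a model `Q` to a full sequence `x ∈ V^T`. -/
noncomputable def seqProb {d T : ℕ} (Q : Model d T) (x : Fin T → Fin d) : ℝ :=
  ∏ t, Q t (fun s => x ⟨s, s.isLt.trans t.isLt⟩) (x t)

/-- `L^T(Q,P) = E_Q [ Σ_t log p_t(X_{<t})_{X_t} ]` in the extended reals. -/
noncomputable def Lval {d T : ℕ} (Q P : Model d T) : EReal :=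
  ∑ x : Fin T → Fin d, ((seqProb Q x : ℝ) : EReal) *
    ∑ t, elog (P t (fun s => x ⟨s, s.isLt.trans t.isLt⟩) (x t))

/-- A strategy map has no foresight if its decision at time `t` depends only on the
model's conditional distributions up to time `t`. -/
def noForesight {d T : ℕ} (Q : Model d T → Model d T) : Prop :=
  ∀ (Phat Phat' : Model d T) (t : Fin T),
    (∀ s : Fin T, s ≤ t → Phat s = Phat' s) → Q Phat t = Q Phat' t

/-! The worst case of `Lval` decouples over time: the adversary chooses every conditional row
independently inside its ball, so the worst-case value of a strategy lies between the sums over `t`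
of the smallest and of the largest one-step worst case over contexts. For `Q̃` each one-step worst
case is the optimal robust value of the row `P̂_t(x_{<t})`. Replacing, at each time, all rows of
`P̂` by the row of the context where this optimal value is smallest gives an admissible `P̂'` on
which no strategy does better than the sum of these minima, while `Q̃(P̂)` achieves at least it. -/

namespace EReal

variable {ι : Type*}

lemma coe_finset_sum_s3 (s : Finset ι) (w : ι → ℝ) :
    ((∑ i ∈ s, w i : ℝ) : EReal) = ∑ i ∈ s, (w i : EReal) :=
  map_sum (⟨⟨(↑), coe_zero⟩, coe_add⟩ : ℝ →+ EReal) w s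

lemma coe_mul_finset_sum {c : ℝ} (hc : 0 ≤ c) (s : Finset ι) (f : ι → EReal) :
    (c : EReal) * ∑ i ∈ s, f i = ∑ i ∈ s, (c : EReal) * f i :=
  map_sum (⟨⟨((c : EReal) * ·), mul_zero _⟩,
    left_distrib_of_nonneg_of_ne_top (EReal.coe_nonneg.mpr hc) (coe_ne_top c)⟩ : EReal →+ EReal) f s

lemma finset_sum_coe_mul {s : Finset ι} {w : ι → ℝ} (hw : ∀ i ∈ s, 0 ≤ w i) (C : EReal) :
    ∑ i ∈ s, (w i : EReal) * C = ((∑ i ∈ s, w i : ℝ) : EReal) * C := by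
  classical
  induction s using Finset.induction with
  | empty => simp
  | insert a s ha ih =>
    rw [sum_insert ha, sum_insert ha, coe_add,
      right_distrib_of_nonneg (EReal.coe_nonneg.mpr (hw a (mem_insert_self a s)))
        (EReal.coe_nonneg.mpr (sum_nonneg fun i hi => hw i (mem_insert_of_mem hi))),
      ih fun i hi => hw i (mem_insert_of_mem hi)]

lemma sum_coe_mul_add_const [Fintype ι] {w : ι → ℝ} (hw : ∀ i, 0 ≤ w i) (hw1 : ∑ i, w i = 1)
    (f : ι → EReal) (C : EReal) :
    ∑ i, (w i : EReal) * (f i + C) = ∑ i, (w i : EReal) * f i + C := by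
  simp_rw [left_distrib_of_nonneg_of_ne_top (EReal.coe_nonneg.mpr (hw _)) (coe_ne_top _)]
  rw [sum_add_distrib, finset_sum_coe_mul (fun i _ => hw i), hw1, coe_one, one_mul]

lemma exists_lt_lt_add_eq_of_add_lt {a b : EReal} {z : ℝ} (ha : a ≠ ⊤) (hb : b ≠ ⊤)
    (h : a + b < z) : ∃ x y : ℝ, a < x ∧ b < y ∧ x + y = z := by
  induction a using EReal.rec with
  | bot =>
    obtain ⟨y, hy, -⟩ := exists_between_coe_real (lt_top_iff_ne_top.mpr hb)
    exact ⟨z - y, y, bot_lt_coe _, hy, _root_.sub_add_cancel z y⟩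
  | top => exact absurd rfl ha
  | coe a =>
    have hb' : b < (z - a : ℝ) := by
      rw [coe_sub, EReal.lt_sub_iff_add_lt (.inl (coe_ne_bot a)) (.inl (coe_ne_top a)), add_comm]
      exact h
    obtain ⟨y, hby, hya⟩ := exists_between_coe_real hb'
    refine ⟨z - y, y, ?_, hby, _root_.sub_add_cancel z y⟩
    have : y < z - a := by exact_mod_cast hya
    exact_mod_cast (by linarith : a < z - y)

lemma exists_lt_sum_le_of_sum_lt {s : Finset ι} {m : ι → EReal} (hm : ∀ i ∈ s, m i ≠ ⊤)
    {z : ℝ} (h : ∑ i ∈ s, m i < z) : ∃ r : ι → ℝ, (∀ i ∈ s, m i < r i) ∧ ∑ i ∈ s, r i ≤ z := by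
  classical
  induction s using Finset.induction generalizing z with
  | empty => exact ⟨0, by simp, by exact_mod_cast (by simpa using h.le)⟩
  | insert a s ha ih =>
    rw [sum_insert ha] at h
    have hs : ∑ i ∈ s, m i ≠ ⊤ := Finset.sum_induction _ (· ≠ ⊤) (fun _ _ => add_ne_top)
      (coe_ne_top 0) fun i hi => hm i (mem_insert_of_mem hi)
    obtain ⟨x, y, hax, hsy, rfl⟩ :=
      exists_lt_lt_add_eq_of_add_lt (hm a (mem_insert_self a s)) hs h
    obtain ⟨r, hr, hrs⟩ := ih (fun i hi => hm i (mem_insert_of_mem hi)) hsy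
    refine ⟨Function.update r a x, ?_, ?_⟩
    · intro i hi
      rcases mem_insert.mp hi with rfl | hi
      · simpa using hax
      · rw [Function.update_of_ne (ne_of_mem_of_not_mem hi ha)]
        exact hr i hi
    · rw [sum_insert ha, Function.update_self, sum_congr rfl fun i hi =>
        Function.update_of_ne (ne_of_mem_of_not_mem hi ha) x r]
      linarith

end EReal

lemma elog_nonpos {x : ℝ} (hx : x ≤ 1) : elog x ≤ 0 := by
  unfold elog
  split_ifs with h
  · exact bot_le
  · exact_mod_cast Real.log_nonpos (not_le.mp h).le hx

lemma le_one_of_mem_simplex {d : ℕ} {p : Fin d → ℝ} (hp : p ∈ simplex d) (i : Fin d) : p i ≤ 1 :=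
  hp.2 ▸ single_le_sum (fun j _ => hp.1 j) (mem_univ i)

lemma obj_nonpos {d : ℕ} {q p : Fin d → ℝ} (hq : ∀ i, 0 ≤ q i) (hp : p ∈ simplex d) :
    obj q p ≤ 0 :=
  sum_nonpos fun i _ => mul_nonpos_of_nonneg_of_nonpos (EReal.coe_nonneg.mpr (hq i))
    (elog_nonpos (le_one_of_mem_simplex hp i))

lemma mem_nbhd_self {d : ℕ} {p : Fin d → ℝ} (hp : p ∈ simplex d) {ε : ℝ} (hε : 0 ≤ ε) :
    p ∈ nbhd p ε :=
  ⟨hp, by simpa [dTV] using hε⟩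

section Model

variable {d T : ℕ}

noncomputable def seqLogLik (P : Model d T) (x : Fin T → Fin d) : EReal :=
  ∑ t, elog (P t (fun s => x ⟨s, s.isLt.trans t.isLt⟩) (x t))

lemma Lval_eq_sum_seqProb_mul (Q P : Model d T) :
    Lval Q P = ∑ x, (seqProb Q x : EReal) * seqLogLik P x := rfl

def Model.tail (P : Model d (T + 1)) (j : Fin d) : Model d T :=
  fun t c => P t.succ (Fin.cons j c)

lemma validModel.tail {P : Model d (T + 1)} (hP : validModel P) (j : Fin d) :
    validModel (P.tail j) :=
  fun t c => hP t.succ (Fin.cons j c)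

lemma validModel.nonempty_context {P : Model d T} (hP : validModel P) (t : Fin T) :
    Nonempty (Fin t → Fin d) := by
  have hd : d ≠ 0 := by
    rintro rfl
    simpa using (hP ⟨0, t.pos⟩ Fin.elim0).2
  exact ⟨fun _ => ⟨0, Nat.pos_of_ne_zero hd⟩⟩

lemma prefix_cons (j : Fin d) (y : Fin T → Fin d) (t : Fin T) :
    (fun s : Fin t.succ => (Fin.cons j y : Fin (T + 1) → Fin d) ⟨s, s.isLt.trans t.succ.isLt⟩)
      = Fin.cons j (fun s : Fin t => y ⟨s, s.isLt.trans t.isLt⟩) := by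
  funext s
  induction s using Fin.cases <;> rfl

lemma prefix_zero (x : Fin (T + 1) → Fin d) :
    (fun s : Fin (0 : Fin (T + 1)) => x ⟨s, s.isLt.trans (0 : Fin (T + 1)).isLt⟩) = Fin.elim0 :=
  funext fun s => s.elim0

lemma seqProb_cons (Q : Model d (T + 1)) (j : Fin d) (y : Fin T → Fin d) :
    seqProb Q (Fin.cons j y) = Q 0 Fin.elim0 j * seqProb (Q.tail j) y := by
  rw [seqProb, Fin.prod_univ_succ, prefix_zero]
  congr 1
  exact prod_congr rfl fun t _ => by rw [prefix_cons, Fin.cons_succ]; rfl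

lemma seqLogLik_cons (P : Model d (T + 1)) (j : Fin d) (y : Fin T → Fin d) :
    seqLogLik P (Fin.cons j y) = elog (P 0 Fin.elim0 j) + seqLogLik (P.tail j) y := by
  rw [seqLogLik, Fin.sum_univ_succ, prefix_zero]
  congr 1
  exact sum_congr rfl fun t _ => by rw [prefix_cons, Fin.cons_succ]; rfl

lemma Fin.sum_univ_fun_succ {M : Type*} [AddCommMonoid M] (F : (Fin (T + 1) → Fin d) → M) :
    ∑ x, F x = ∑ j, ∑ y : Fin T → Fin d, F (Fin.cons j y) := by
  rw [← Fintype.sum_prod_type']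
  exact (Fintype.sum_equiv (Fin.consEquiv fun _ => Fin d) _ _ fun _ => rfl).symm

lemma seqProb_nonneg {Q : Model d T} (hQ : validModel Q) (x : Fin T → Fin d) :
    0 ≤ seqProb Q x :=
  prod_nonneg fun t _ => (hQ t _).1 _

lemma sum_seqProb {Q : Model d T} (hQ : validModel Q) : ∑ x, seqProb Q x = 1 := by
  induction T with
  | zero => simp [seqProb]
  | succ T ih =>
    rw [Fin.sum_univ_fun_succ]
    simp_rw [seqProb_cons, ← mul_sum, ih (hQ.tail _), mul_one]
    exact (hQ 0 Fin.elim0).2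

lemma Lval_cons {Q : Model d (T + 1)} (hQ : validModel Q) (P : Model d (T + 1)) :
    Lval Q P = ∑ j, (Q 0 Fin.elim0 j : EReal) *
      (elog (P 0 Fin.elim0 j) + Lval (Q.tail j) (P.tail j)) := by
  rw [Lval_eq_sum_seqProb_mul, Fin.sum_univ_fun_succ]
  refine sum_congr rfl fun j _ => ?_
  have hq := (hQ 0 Fin.elim0).1 j
  simp_rw [seqProb_cons, seqLogLik_cons, EReal.coe_mul, mul_assoc,
    ← EReal.coe_mul_finset_sum hq, add_comm (elog _)]
  rw [EReal.sum_coe_mul_add_const (seqProb_nonneg (hQ.tail j)) (sum_seqProb (hQ.tail j)),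
    Lval_eq_sum_seqProb_mul]

lemma sum_le_Lval {Q : Model d T} (hQ : validModel Q) (P : Model d T) (m : Fin T → EReal)
    (hm : ∀ t c, m t ≤ obj (Q t c) (P t c)) : ∑ t, m t ≤ Lval Q P := by
  induction T with
  | zero => simp [Lval]
  | succ T ih =>
    have hq := hQ 0 Fin.elim0
    rw [Lval_cons hQ, Fin.sum_univ_succ]
    calc m 0 + ∑ t : Fin T, m t.succ
        ≤ obj (Q 0 Fin.elim0) (P 0 Fin.elim0) + ∑ t : Fin T, m t.succ :=
          add_le_add_left (hm 0 Fin.elim0) _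
      _ = ∑ j, (Q 0 Fin.elim0 j : EReal) * (elog (P 0 Fin.elim0 j) + ∑ t : Fin T, m t.succ) :=
          (EReal.sum_coe_mul_add_const hq.1 hq.2 _ _).symm
      _ ≤ _ := sum_le_sum fun j _ => mul_le_mul_of_nonneg_left
          (add_le_add_right (ih (hQ.tail j) (P.tail j) _ fun t c => hm t.succ _) _)
          (EReal.coe_nonneg.mpr (hq.1 j))

lemma Lval_le_sum {Q : Model d T} (hQ : validModel Q) (P : Model d T) (M : Fin T → EReal)
    (hM : ∀ t c, obj (Q t c) (P t c) ≤ M t) : Lval Q P ≤ ∑ t, M t := by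
  induction T with
  | zero => simp [Lval]
  | succ T ih =>
    have hq := hQ 0 Fin.elim0
    rw [Lval_cons hQ, Fin.sum_univ_succ]
    calc _ ≤ ∑ j, (Q 0 Fin.elim0 j : EReal) * (elog (P 0 Fin.elim0 j) + ∑ t : Fin T, M t.succ) :=
          sum_le_sum fun j _ => mul_le_mul_of_nonneg_left
            (add_le_add_right (ih (hQ.tail j) (P.tail j) _ fun t c => hM t.succ _) _)
            (EReal.coe_nonneg.mpr (hq.1 j))
      _ = obj (Q 0 Fin.elim0) (P 0 Fin.elim0) + ∑ t : Fin T, M t.succ :=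
          EReal.sum_coe_mul_add_const hq.1 hq.2 _ _
      _ ≤ M 0 + ∑ t : Fin T, M t.succ := add_le_add_left (hM 0 Fin.elim0) _

noncomputable def robustObj (ε : ℝ) (phat q : Fin d → ℝ) : EReal :=
  ⨅ p ∈ nbhd phat ε, obj q p

noncomputable def robustValue (ε : ℝ) (phat : Fin d → ℝ) : EReal :=
  ⨆ q ∈ simplex d, robustObj ε phat q

lemma robustObj_le_robustValue {ε : ℝ} {phat q : Fin d → ℝ} (hq : q ∈ simplex d) :
    robustObj ε phat q ≤ robustValue ε phat :=
  le_iSup₂ (f := fun q _ => robustObj ε phat q) q hq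

lemma robustObj_eq_robustValue {ε : ℝ} {phat q : Fin d → ℝ} (hq : q ∈ simplex d)
    (hopt : ∀ q' ∈ simplex d, robustObj ε phat q' ≤ robustObj ε phat q) :
    robustObj ε phat q = robustValue ε phat :=
  (robustObj_le_robustValue hq).antisymm (iSup₂_le hopt)

lemma robustValue_nonpos {ε : ℝ} (hε : 0 ≤ ε) {phat : Fin d → ℝ} (hphat : phat ∈ simplex d) :
    robustValue ε phat ≤ 0 :=
  iSup₂_le fun _ hq => (iInf₂_le phat (mem_nbhd_self hphat hε)).trans (obj_nonpos hq.1 hphat)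

lemma sum_le_iInf_Lval {Q : Model d T} (hQ : validModel Q) {Phat : Model d T} {ε : ℝ}
    (m : Fin T → EReal) (hm : ∀ t c, m t ≤ robustObj ε (Phat t c) (Q t c)) :
    ∑ t, m t ≤ ⨅ P ∈ modelNbhd Phat ε, Lval Q P :=
  le_iInf₂ fun P hP => sum_le_Lval hQ P m fun t c =>
    (hm t c).trans (iInf₂_le _ ⟨hP.1 t c, hP.2 t c⟩)

/-- The adversary picks, context by context, a nearly worst-case row of the ball. -/
lemma iInf_Lval_le_sum {Q : Model d T} (hQ : validModel Q) {Phat : Model d T} {ε : ℝ}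
    (m : Fin T → EReal) (hm_top : ∀ t, m t ≠ ⊤)
    (hm : ∀ t c, robustObj ε (Phat t c) (Q t c) ≤ m t) :
    ⨅ P ∈ modelNbhd Phat ε, Lval Q P ≤ ∑ t, m t := by
  refine EReal.le_of_forall_lt_iff_le.mp fun z hz => ?_
  obtain ⟨r, hmr, hrz⟩ := EReal.exists_lt_sum_le_of_sum_lt (fun t _ => hm_top t) hz
  have hrow : ∀ t c, ∃ p ∈ nbhd (Phat t c) ε, obj (Q t c) p < r t := fun t c => by
    simpa only [robustObj, iInf_lt_iff, exists_prop] using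
      (hm t c).trans_lt (hmr t (mem_univ t))
  choose P hPmem hPlt using hrow
  calc ⨅ P ∈ modelNbhd Phat ε, Lval Q P ≤ Lval Q P :=
        iInf₂_le P ⟨fun t c => (hPmem t c).1, fun t c => (hPmem t c).2⟩
    _ ≤ ∑ t, (r t : EReal) := Lval_le_sum hQ P _ fun t c => (hPlt t c).le
    _ ≤ z := by rw [← EReal.coe_finset_sum_s3]; exact_mod_cast hrz

end Model

theorem stmt3_general {d T : ℕ} (ε : ℝ) (hε : 0 < ε)
    (Q Qt : Model d T → Model d T)
    (hQvalid : ∀ Phat, validModel (Q Phat))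
    (hQt : ∀ (Phat : Model d T) (t : Fin T) (x : Fin t → Fin d),
        Qt Phat t x ∈ simplex d ∧
        ∀ q ∈ simplex d,
          ⨅ p ∈ nbhd (Phat t x) ε, obj q p
            ≤ ⨅ p ∈ nbhd (Phat t x) ε, obj (Qt Phat t x) p) :
    (⨅ Phat ∈ {P : Model d T | validModel P ∧ ∀ t x, ∃ i, ε < P t x i},
        ⨅ P ∈ modelNbhd Phat ε, Lval (Q Phat) P)
      ≤ ⨅ Phat ∈ {P : Model d T | validModel P ∧ ∀ t x, ∃ i, ε < P t x i},
          ⨅ P ∈ modelNbhd Phat ε, Lval (Qt Phat) P := by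
  refine le_iInf₂ fun Phat ⟨hPv, hPe⟩ => ?_
  have hQt_value : ∀ t c, robustObj ε (Phat t c) (Qt Phat t c) = robustValue ε (Phat t c) :=
    fun t c => robustObj_eq_robustValue (hQt Phat t c).1 (hQt Phat t c).2
  choose ct hct using fun t =>
    have := hPv.nonempty_context t
    Finite.exists_min fun c => robustValue ε (Phat t c)
  let Phat' : Model d T := fun t _ => Phat t (ct t)
  let m : Fin T → EReal := fun t => robustValue ε (Phat t (ct t))
  calc _ ≤ ⨅ P ∈ modelNbhd Phat' ε, Lval (Q Phat') P :=
        iInf₂_le Phat' ⟨fun t _ => hPv t (ct t), fun t _ => hPe t (ct t)⟩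
    _ ≤ ∑ t, m t := iInf_Lval_le_sum (hQvalid Phat') m
        (fun t => ne_top_of_le_ne_top EReal.zero_ne_top (robustValue_nonpos hε.le (hPv t (ct t))))
        fun t c => robustObj_le_robustValue (hQvalid Phat' t c)
    _ ≤ _ := sum_le_iInf_Lval (fun t c => (hQt Phat t c).1) m
        fun t c => (hct t c).trans (hQt_value t c).ge

/-- the locally optimal strategy `Q̃` achieves the best worst-case
multi-step value among all no-foresight strategy maps. -/
theorem stmt3 {d T : ℕ} (hT : 1 ≤ T) (ε : ℝ) (hε : 0 < ε)
    (Q Qt : Model d T → Model d T)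
    (hQvalid : ∀ Phat, validModel (Q Phat))
    (hQnf : noForesight Q)
    (hQt : ∀ (Phat : Model d T) (t : Fin T) (x : Fin t → Fin d),
        Qt Phat t x ∈ simplex d ∧
        ∀ q ∈ simplex d,
          ⨅ p ∈ nbhd (Phat t x) ε, obj q p
            ≤ ⨅ p ∈ nbhd (Phat t x) ε, obj (Qt Phat t x) p) :
    (⨅ Phat ∈ {P : Model d T | validModel P ∧ ∀ t x, ∃ i, ε < P t x i},
        ⨅ P ∈ modelNbhd Phat ε, Lval (Q Phat) P)
      ≤ ⨅ Phat ∈ {P : Model d T | validModel P ∧ ∀ t x, ∃ i, ε < P t x i},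
          ⨅ P ∈ modelNbhd Phat ε, Lval (Qt Phat) P :=
  stmt3_general ε hε Q Qt hQvalid hQt
end

section
/- Let f : (0,∞) → ℝ be non-decreasing and concave, p̂ ∈ Δ(V) with p̂_1 ≥ … ≥ p̂_d > 0, and 0 < ε < p̂_d. Then for every q ∈ Δ(V), the minimum over p ∈ N(p̂) of Σ_i q_i f(p_i) equals Σ_i q_i f(p̂_i) − max_{i ≠ j} { q_i g⁻(p̂_i) − q_j g⁺(p̂_j) }, where g⁻(x) = f(x) − f(x − ε) and g⁺(x) = f(x + ε) − f(x). -/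
open Finset

/-! Moving mass `ε` from coordinate `i` to coordinate `j` changes the objective by
`- q i * g⁻ (p̂ i) + q j * g⁺ (p̂ j)`, so the value is attained. Conversely, for `p ∈ N(p̂)` split
`p̂ - p = a - b` into positive and negative parts, so that `∑ a = ∑ b ≤ ε`. By concavity the
coordinate `k` loses at most `(a k * q k * g⁻ (p̂ k) - b k * q k * g⁺ (p̂ k)) / ε`, and pairing the
mass `a i` removed with the mass `b j` added (necessarily `i ≠ j`) bounds the total loss by
`(∑ a) / ε ≤ 1` times the maximum over pairs, which is nonnegative since `g⁺ ≤ g⁻`. -/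

section Concave

variable {s : Set ℝ} {f : ℝ → ℝ}

theorem ConcaveOn.add_mul_sub_le (hf : ConcaveOn ℝ s f) {a b t : ℝ} (ha : a ∈ s) (hb : b ∈ s)
    (ht₀ : 0 ≤ t) (ht₁ : t ≤ 1) : f a + t * (f b - f a) ≤ f (a + t * (b - a)) := by
  have h := hf.2 ha hb (sub_nonneg.2 ht₁) ht₀ (by ring)
  simp only [smul_eq_mul] at h
  rw [show (1 - t) * a + t * b = a + t * (b - a) by ring] at h
  linarith

theorem ConcaveOn.apply_add_sub_le_sub_apply_sub (hf : ConcaveOn ℝ s f) {x ε : ℝ}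
    (hl : x - ε ∈ s) (hr : x + ε ∈ s) : f (x + ε) - f x ≤ f x - f (x - ε) := by
  have h := hf.add_mul_sub_le hl hr (by norm_num : (0 : ℝ) ≤ 1 / 2) (by norm_num)
  rw [show x - ε + 1 / 2 * (x + ε - (x - ε)) = x by ring] at h
  linarith

theorem ConcaveOn.mul_sub_le_of_abs_sub_le (hf : ConcaveOn ℝ s f) {x y ε : ℝ} (hε : 0 < ε)
    (hl : x - ε ∈ s) (hr : x + ε ∈ s) (hxy : |x - y| ≤ ε) :
    ε * (f x - f y) ≤ (x - y)⁺ * (f x - f (x - ε)) - (x - y)⁻ * (f (x + ε) - f x) := by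
  have hx : x ∈ s := hf.1.ordConnected.out hl hr ⟨by linarith, by linarith⟩
  have hscale : |x - y| / ε * ε = |x - y| := div_mul_cancel₀ _ hε.ne'
  have ht₀ : 0 ≤ |x - y| / ε := div_nonneg (abs_nonneg _) hε.le
  have ht₁ : |x - y| / ε ≤ 1 := (div_le_one hε).2 hxy
  rcases le_total y x with hyx | hxy
  · have h := hf.add_mul_sub_le hx hl ht₀ ht₁
    rw [abs_of_nonneg (sub_nonneg.2 hyx)] at h hscale
    rw [show x + (x - y) / ε * (x - ε - x) = y by linear_combination -hscale] at h
    rw [posPart_eq_self.2 (sub_nonneg.2 hyx), negPart_eq_zero.2 (sub_nonneg.2 hyx)]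
    linear_combination ε * h + (f x - f (x - ε)) * hscale
  · have h := hf.add_mul_sub_le hx hr ht₀ ht₁
    rw [abs_of_nonpos (sub_nonpos.2 hxy)] at h hscale
    rw [show x + -(x - y) / ε * (x + ε - x) = y by linear_combination hscale] at h
    rw [posPart_eq_zero.2 (sub_nonpos.2 hxy), negPart_eq_neg.2 (sub_nonpos.2 hxy)]
    linear_combination ε * h + (f x - f (x + ε)) * hscale

end Concave

section Transport

variable {ι : Type*} [Fintype ι]

theorem sum_mul_sub_sum_mul_le_of_sum_eq {a b u v : ι → ℝ} {M : ℝ} (ha : ∀ i, 0 ≤ a i)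
    (hb : ∀ j, 0 ≤ b j) (hab : ∑ i, a i = ∑ j, b j)
    (hM : ∀ i j, a i ≠ 0 → b j ≠ 0 → u i - v j ≤ M) :
    ∑ i, a i * u i - ∑ j, b j * v j ≤ (∑ i, a i) * M := by
  rcases (sum_nonneg fun i _ => ha i : 0 ≤ ∑ i, a i).eq_or_lt with hm | hm
  · have ha0 := (sum_eq_zero_iff_of_nonneg fun i _ => ha i).1 hm.symm
    have hb0 := (sum_eq_zero_iff_of_nonneg fun j _ => hb j).1 (by rw [← hab, ← hm])
    simp [ha0, hb0]
  refine le_of_mul_le_mul_left ?_ hm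
  calc (∑ i, a i) * (∑ i, a i * u i - ∑ j, b j * v j)
      = ∑ i, ∑ j, a i * b j * (u i - v j) := by
        rw [mul_sub, mul_comm, hab, sum_mul_sum, ← hab, sum_mul_sum, ← sum_sub_distrib]
        refine sum_congr rfl fun i _ => ?_
        rw [← sum_sub_distrib]
        exact sum_congr rfl fun j _ => by ring
    _ ≤ ∑ i, ∑ j, a i * b j * M := by
        refine sum_le_sum fun i _ => sum_le_sum fun j _ => ?_
        by_cases hi : a i = 0
        · simp [hi]
        by_cases hj : b j = 0
        · simp [hj]
        exact mul_le_mul_of_nonneg_left (hM i j hi hj) (mul_nonneg (ha i) (hb j))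
    _ = (∑ i, a i) * ((∑ j, b j) * M) := by
        rw [← mul_assoc, sum_mul_sum, sum_mul]
        exact sum_congr rfl fun i _ => by rw [sum_mul]
    _ = (∑ i, a i) * ((∑ i, a i) * M) := by rw [← hab]

theorem sum_posPart_eq_sum_negPart {w : ι → ℝ} (hw : ∑ i, w i = 0) :
    ∑ i, (w i)⁺ = ∑ i, (w i)⁻ := by
  rw [← sub_eq_zero, ← sum_sub_distrib, ← hw]
  exact sum_congr rfl fun i _ => posPart_sub_negPart (w i)

theorem exists_ne_sub_nonneg [Nontrivial ι] {u v : ι → ℝ} (huv : ∀ i, v i ≤ u i) :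
    ∃ i j, i ≠ j ∧ 0 ≤ u i - v j := by
  obtain ⟨i, -, hi⟩ := exists_max_image univ u univ_nonempty
  obtain ⟨j, hji⟩ := exists_ne i
  exact ⟨i, j, hji.symm, by linarith [hi j (mem_univ j), huv j]⟩

theorem isGreatest_sSup_sub_of_ne [Nontrivial ι] (u v : ι → ℝ) :
    IsGreatest {x | ∃ i j, i ≠ j ∧ x = u i - v j} (sSup {x | ∃ i j, i ≠ j ∧ x = u i - v j}) := by
  set S := {x | ∃ i j, i ≠ j ∧ x = u i - v j}
  have hfin : S.Finite := (Set.finite_range fun ij : ι × ι => u ij.1 - v ij.2).subset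
    fun x ⟨i, j, _, hx⟩ => ⟨(i, j), hx.symm⟩
  obtain ⟨i, j, hij⟩ := exists_pair_ne ι
  have hne : S.Nonempty := ⟨_, i, j, hij, rfl⟩
  exact ⟨hne.csSup_mem hfin, fun x hx => le_csSup hfin.bddAbove hx⟩

end Transport

section Transfer

variable {ι : Type*} [DecidableEq ι]

def transfer (p : ι → ℝ) (i j : ι) (ε : ℝ) : ι → ℝ :=
  Function.update (Function.update p i (p i - ε)) j (p j + ε)

theorem sum_comp_transfer [Fintype ι] {p : ι → ℝ} {i j : ι} (hij : i ≠ j) (ε : ℝ)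
    (φ : ι → ℝ → ℝ) :
    ∑ k, φ k (transfer p i j ε k)
      = ∑ k, φ k (p k) + (φ i (p i - ε) - φ i (p i)) + (φ j (p j + ε) - φ j (p j)) := by
  rw [add_assoc, ← sub_eq_iff_eq_add', ← sum_sub_distrib, Fintype.sum_eq_add i j hij]
  · simp [transfer, hij]
  · rintro k ⟨hki, hkj⟩
    simp [transfer, hki, hkj]

theorem transfer_mem_nbhd {d : ℕ} {phat : Fin d → ℝ} (hphat : phat ∈ simplex d) {i j : Fin d}
    (hij : i ≠ j) {ε : ℝ} (hε : 0 ≤ ε) (hεi : ε ≤ phat i) : transfer phat i j ε ∈ nbhd phat ε := by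
  refine ⟨⟨fun k => ?_, ?_⟩, ?_⟩
  · by_cases hkj : k = j
    · subst hkj
      simpa [transfer] using add_nonneg (hphat.1 k) hε
    by_cases hki : k = i
    · subst hki
      simpa [transfer, hkj] using sub_nonneg.2 hεi
    simpa [transfer, hki, hkj] using hphat.1 k
  · rw [sum_comp_transfer hij ε fun _ x => x, hphat.2]
    ring
  · rw [dTV, sum_comp_transfer hij ε fun k x => |x - phat k|]
    simp [abs_of_nonneg hε]

end Transfer

theorem sum_mul_sub_sum_mul_le_of_mem_nbhd {d : ℕ} {s : Set ℝ} {f : ℝ → ℝ}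
    (hf : ConcaveOn ℝ s f) {phat p q : Fin d → ℝ} {ε M : ℝ} (hε : 0 < ε)
    (hs : ∀ i, phat i - ε ∈ s ∧ phat i + ε ∈ s) (hphat : ∑ i, phat i = 1) (hq : ∀ i, 0 ≤ q i)
    (hp : p ∈ nbhd phat ε)
    (hM : ∀ i j, i ≠ j →
      q i * (f (phat i) - f (phat i - ε)) - q j * (f (phat j + ε) - f (phat j)) ≤ M)
    (hM0 : 0 ≤ M) :
    ∑ i, q i * f (phat i) - ∑ i, q i * f (p i) ≤ M := by
  obtain ⟨⟨-, hp1⟩, hdist⟩ := hp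
  set w : Fin d → ℝ := fun i => phat i - p i
  have hpn : ∑ i, (w i)⁺ = ∑ i, (w i)⁻ :=
    sum_posPart_eq_sum_negPart (by simp [w, sum_sub_distrib, hp1, hphat])
  have hmass : ∑ i, (w i)⁺ ≤ ε := by
    have h : ∑ i, (w i)⁺ + ∑ i, (w i)⁻ = ∑ i, |p i - phat i| := by
      rw [← sum_add_distrib]
      exact sum_congr rfl fun i _ => by rw [posPart_add_negPart, abs_sub_comm]
    rw [dTV] at hdist
    linarith
  have hcoord : ∀ i, |phat i - p i| ≤ ε := fun i => abs_le.2
    ⟨by linarith [neg_le_negPart (w i), single_le_sum (fun k _ => negPart_nonneg (w k)) (mem_univ i)],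
      by linarith [le_posPart (w i), single_le_sum (fun k _ => posPart_nonneg (w k)) (mem_univ i)]⟩
  have hloss : ∀ i, ε * (q i * f (phat i) - q i * f (p i))
      ≤ (w i)⁺ * (q i * (f (phat i) - f (phat i - ε)))
        - (w i)⁻ * (q i * (f (phat i + ε) - f (phat i))) := fun i => by
    have h := hf.mul_sub_le_of_abs_sub_le hε (hs i).1 (hs i).2 (hcoord i)
    linarith [mul_le_mul_of_nonneg_left h (hq i)]
  have htransport := sum_mul_sub_sum_mul_le_of_sum_eq (fun i => posPart_nonneg (w i))
    (fun i => negPart_nonneg (w i)) hpn (u := fun i => q i * (f (phat i) - f (phat i - ε)))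
    (v := fun j => q j * (f (phat j + ε) - f (phat j))) (M := M) fun i j hi hj => hM i j <| by
      rintro rfl
      exact hj (negPart_eq_zero.2 (not_le.1 (mt posPart_eq_zero.2 hi)).le)
  refine le_of_mul_le_mul_left ?_ hε
  calc ε * (∑ i, q i * f (phat i) - ∑ i, q i * f (p i))
      = ∑ i, ε * (q i * f (phat i) - q i * f (p i)) := by rw [← sum_sub_distrib, mul_sum]
    _ ≤ _ := sum_le_sum fun i _ => hloss i
    _ ≤ (∑ i, (w i)⁺) * M := by rwa [sum_sub_distrib]
    _ ≤ ε * M := mul_le_mul_of_nonneg_right hmass hM0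

/-- closed form of the inner minimization in the small-budget case
`0 < ε < p̂_d` (the minimum is attained, and it equals the regularized value). -/
theorem stmt5 {d : ℕ} (hd : 2 ≤ d) (f : ℝ → ℝ)
    (hconc : ConcaveOn ℝ (Set.Ioi 0) f)
    (phat : Fin d → ℝ)
    (hmem : phat ∈ simplex d)
    (hsort : ∀ i j : Fin d, i ≤ j → phat j ≤ phat i)
    (ε : ℝ) (hε : 0 < ε) (hεd : ε < phat ⟨d - 1, by omega⟩)
    (q : Fin d → ℝ) (hq : q ∈ simplex d) :
    IsLeast {y : ℝ | ∃ p ∈ nbhd phat ε, y = ∑ i, q i * f (p i)}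
      ((∑ i, q i * f (phat i))
        - sSup {x : ℝ | ∃ i j : Fin d, i ≠ j ∧
            x = q i * (f (phat i) - f (phat i - ε))
              - q j * (f (phat j + ε) - f (phat j))}) := by
  have hεp : ∀ i, ε < phat i := fun i =>
    hεd.trans_le (hsort i _ (Fin.le_def.2 (Nat.le_sub_one_of_lt i.isLt)))
  have hs : ∀ i, phat i - ε ∈ Set.Ioi (0 : ℝ) ∧ phat i + ε ∈ Set.Ioi (0 : ℝ) := fun i =>
    ⟨sub_pos.2 (hεp i), by simp only [Set.mem_Ioi]; linarith [hεp i]⟩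
  have : Nontrivial (Fin d) := Fin.nontrivial_iff_two_le.2 hd
  obtain ⟨⟨i, j, hij, hM⟩, hub⟩ :=
    isGreatest_sSup_sub_of_ne (fun i => q i * (f (phat i) - f (phat i - ε)))
      (fun j => q j * (f (phat j + ε) - f (phat j)))
  refine ⟨⟨transfer phat i j ε, transfer_mem_nbhd hmem hij hε.le (hεp i).le, ?_⟩, ?_⟩
  · rw [sum_comp_transfer hij ε fun k x => q k * f x, hM]
    ring
  rintro y ⟨p, hp, rfl⟩
  obtain ⟨i', j', hij', hnonneg⟩ := exists_ne_sub_nonneg fun k =>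
    mul_le_mul_of_nonneg_left (hconc.apply_add_sub_le_sub_apply_sub (hs k).1 (hs k).2) (hq.1 k)
  have hM0 := hnonneg.trans (hub ⟨i', j', hij', rfl⟩)
  linarith [sum_mul_sub_sum_mul_le_of_mem_nbhd hconc hε hs hmem.2 hq.1 hp
    (fun i j hij => hub ⟨i, j, hij, rfl⟩) hM0]
end
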